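/- arXiv:1210.1937 — 3 statements merged into one kernel-verified Lean document; each statement's English description precedes it below -/
import Mathlib

section
/- For all r in the open interval (0, π/√8), the expression 2 + αβ is strictly positive, where α = √8·cot(√8·r) and β = √2·cot(√2·r); equivalently, 2 + 4·cot(√8·r)·cot(√2·r) ≠ 0. -/
open Real

/-
With `t = √2 r` we have `√8 r = 2t` and `αβ = 4 cot(2t) cot t`. The double-angle formula
`2 cot(2t) cot t = cot² t - 1` turns `2 + αβ` into `2 cot² t`, which is positive because
`0 < t < π/2`.
-/

lemma Real.sqrt_eight : √8 = 2 * √2 := by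
  rw [show (8 : ℝ) = 2 ^ 2 * 2 by norm_num, Real.sqrt_mul (by positivity),
    Real.sqrt_sq zero_le_two]

lemma Real.two_mul_cot_two_mul_mul_cot {t : ℝ} (hsin : sin t ≠ 0) (hcos : cos t ≠ 0) :
    2 * cot (2 * t) * cot t = cot t ^ 2 - 1 := by
  rw [cot_eq_cos_div_sin, cot_eq_cos_div_sin, sin_two_mul, cos_two_mul]
  field_simp
  linear_combination sin_sq_add_cos_sq t

/-- For all `r ∈ (0, π/√8)`, with `α = √8·cot(√8 r)` and `β = √2·cot(√2 r)`,
the quantity `2 + α·β` is strictly positive; in particular it is nonzero. -/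
theorem stmt_0 (r : ℝ) (hr0 : 0 < r) (hr1 : r < π / Real.sqrt 8) :
    0 < 2 + (Real.sqrt 8 * Real.cot (Real.sqrt 8 * r)) *
          (Real.sqrt 2 * Real.cot (Real.sqrt 2 * r)) ∧
    2 + (Real.sqrt 8 * Real.cot (Real.sqrt 8 * r)) *
          (Real.sqrt 2 * Real.cot (Real.sqrt 2 * r)) ≠ 0 := by
  set t := √2 * r
  have ht_mem : t ∈ Set.Ioo 0 (π / 2) := by
    rw [lt_div_iff₀ (by positivity), Real.sqrt_eight] at hr1
    exact ⟨by positivity, by linarith⟩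
  have hsin : 0 < sin t := sin_pos_of_pos_of_lt_pi ht_mem.1 (by linarith [ht_mem.2, pi_pos])
  have hcos : 0 < cos t := cos_pos_of_mem_Ioo ⟨by linarith [ht_mem.1, pi_pos], ht_mem.2⟩
  have hcot : 0 < cot t := by rw [cot_eq_cos_div_sin]; exact div_pos hcos hsin
  have hsq : √2 * √2 = 2 := mul_self_sqrt zero_le_two
  have key : 2 + (√8 * cot (√8 * r)) * (√2 * cot t) = 2 * cot t ^ 2 := by
    rw [Real.sqrt_eight, show 2 * √2 * r = 2 * t by ring]
    linear_combination (2 * cot (2 * t) * cot t) * hsq +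
      2 * two_mul_cot_two_mul_mul_cot hsin.ne' hcos.ne'
  have hpos : 0 < 2 + (√8 * cot (√8 * r)) * (√2 * cot t) := by
    rw [key]; exact mul_pos two_pos (pow_pos hcot 2)
  exact ⟨hpos, hpos.ne'⟩
end

section
/- With the normal Jacobi operator formula as above and ξ decomposed as ξ = η(U)U + Σ η(ξ_ν)ξ_ν, one has R̄_N(φ_κ ξ) = 2η(ξ_{κ+1})ξ_{κ+2} − 2η(ξ_{κ+2})ξ_{κ+1} for each κ ∈ {1,2,3} (indices mod 3). -/
open RealInnerProductSpace

private lemma aux13 {V : Type*} [NormedAddCommGroup V] [InnerProductSpace ℝ V]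
    (φ φa φb φc : V →ₗ[ℝ] V) (ξ ξa ξb ξc : V) (RN : V → V)
    (hRN : RN (φa ξ) = φa ξ + (3 * ⟪φa ξ, ξ⟫) • ξ + (3 * ⟪φa ξ, ξa⟫) • ξa
        + (3 * ⟪φa ξ, ξb⟫) • ξb + (3 * ⟪φa ξ, ξc⟫) • ξc
        - (⟪ξ, ξa⟫ • (φa (φ (φa ξ)) - ⟪φa ξ, ξ⟫ • ξa) - ⟪φ (φa ξ), ξa⟫ • φa ξ)
        - (⟪ξ, ξb⟫ • (φb (φ (φa ξ)) - ⟪φa ξ, ξ⟫ • ξb) - ⟪φ (φa ξ), ξb⟫ • φb ξ)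
        - (⟪ξ, ξc⟫ • (φc (φ (φa ξ)) - ⟪φa ξ, ξ⟫ • ξc) - ⟪φ (φa ξ), ξc⟫ • φc ξ))
    (haa : ⟪ξa, ξa⟫ = (1 : ℝ)) (hab : ⟪ξa, ξb⟫ = (0 : ℝ)) (hac : ⟪ξa, ξc⟫ = (0 : ℝ))
    (hskewa : ∀ X Y : V, ⟪φa X, Y⟫ = -⟪X, φa Y⟫)
    (h0 : φa ξa = 0) (hb : φa ξb = ξc) (hc : φa ξc = -ξb)
    (hba : φb ξa = -ξc) (hca : φc ξa = ξb)
    (hφξa : φ ξa = φa ξ)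
    (hφ2a : φ (φ ξa) = -ξa + ⟪ξa, ξ⟫ • ξ) :
    RN (φa ξ) = (2 * ⟪ξ, ξb⟫) • ξc - (2 * ⟪ξ, ξc⟫) • ξb := by
  have pφ : φ (φa ξ) = -ξa + ⟪ξa, ξ⟫ • ξ := by rw [← hφξa, hφ2a]
  have ia : ⟪φa ξ, ξ⟫ = 0 := by
    have h := hskewa ξ ξ
    have h2 := real_inner_comm ξ (φa ξ)
    linarith
  have i1 : ⟪φa ξ, ξa⟫ = 0 := by rw [hskewa, h0, inner_zero_right, neg_zero]
  have i2 : ⟪φa ξ, ξb⟫ = -⟪ξ, ξc⟫ := by rw [hskewa, hb]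
  have i3 : ⟪φa ξ, ξc⟫ = ⟪ξ, ξb⟫ := by rw [hskewa, hc, inner_neg_right, neg_neg]
  have pa : φa (φ (φa ξ)) = ⟪ξa, ξ⟫ • φa ξ := by
    rw [pφ]; simp [h0]
  have pb : φb (φ (φa ξ)) = ξc + ⟪ξa, ξ⟫ • φb ξ := by
    rw [pφ]; simp [hba]
  have pc : φc (φ (φa ξ)) = -ξb + ⟪ξa, ξ⟫ • φc ξ := by
    rw [pφ]; simp [hca]
  have ja : ⟪φ (φa ξ), ξa⟫ = -1 + ⟪ξa, ξ⟫ * ⟪ξ, ξa⟫ := by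
    rw [pφ, inner_add_left, inner_neg_left, real_inner_smul_left, haa]
  have jb : ⟪φ (φa ξ), ξb⟫ = ⟪ξa, ξ⟫ * ⟪ξ, ξb⟫ := by
    rw [pφ, inner_add_left, inner_neg_left, real_inner_smul_left, hab]; ring
  have jc : ⟪φ (φa ξ), ξc⟫ = ⟪ξa, ξ⟫ * ⟪ξ, ξc⟫ := by
    rw [pφ, inner_add_left, inner_neg_left, real_inner_smul_left, hac]; ring
  rw [hRN, ia, i1, i2, i3, pa, pb, pc, ja, jb, jc]
  module

/-- With the normal Jacobi operator formula
`R̄_N X = X + 3η(X)ξ + 3Σ_ν η_ν(X)ξ_ν − Σ_ν [η_ν(ξ)(φ_ν φX − η(X)ξ_ν) − η_ν(φX)φ_ν ξ]`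
and `ξ` decomposed as `ξ = η(U)U + Σ_ν η(ξ_ν)ξ_ν` (with `U` a unit vector
orthogonal to the orthonormal `ξ₁, ξ₂, ξ₃`), under the almost contact and
quaternionic structure identities one has
`R̄_N (φ_κ ξ) = 2η(ξ_{κ+1})ξ_{κ+2} − 2η(ξ_{κ+2})ξ_{κ+1}` for each
`κ ∈ {1,2,3}` (indices mod 3). -/
theorem stmt_13 {V : Type*} [NormedAddCommGroup V] [InnerProductSpace ℝ V]
    (φ φ₁ φ₂ φ₃ : V →ₗ[ℝ] V) (ξ ξ₁ ξ₂ ξ₃ U : V) (RN : V → V)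
    (hRN : ∀ X : V, RN X =
      X + (3 * ⟪X, ξ⟫) • ξ
        + (3 * ⟪X, ξ₁⟫) • ξ₁ + (3 * ⟪X, ξ₂⟫) • ξ₂ + (3 * ⟪X, ξ₃⟫) • ξ₃
        - (⟪ξ, ξ₁⟫ • (φ₁ (φ X) - ⟪X, ξ⟫ • ξ₁) - ⟪φ X, ξ₁⟫ • φ₁ ξ)
        - (⟪ξ, ξ₂⟫ • (φ₂ (φ X) - ⟪X, ξ⟫ • ξ₂) - ⟪φ X, ξ₂⟫ • φ₂ ξ)
        - (⟪ξ, ξ₃⟫ • (φ₃ (φ X) - ⟪X, ξ⟫ • ξ₃) - ⟪φ X, ξ₃⟫ • φ₃ ξ))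
    -- decomposition of ξ
    (hdec : ξ = ⟪U, ξ⟫ • U + ⟪ξ₁, ξ⟫ • ξ₁ + ⟪ξ₂, ξ⟫ • ξ₂ + ⟪ξ₃, ξ⟫ • ξ₃)
    -- orthonormality
    (hU : ⟪U, U⟫ = (1 : ℝ))
    (hU1 : ⟪U, ξ₁⟫ = (0 : ℝ)) (hU2 : ⟪U, ξ₂⟫ = (0 : ℝ))
    (hU3 : ⟪U, ξ₃⟫ = (0 : ℝ))
    (h1 : ⟪ξ₁, ξ₁⟫ = (1 : ℝ)) (h2 : ⟪ξ₂, ξ₂⟫ = (1 : ℝ))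
    (h3 : ⟪ξ₃, ξ₃⟫ = (1 : ℝ))
    (h12o : ⟪ξ₁, ξ₂⟫ = (0 : ℝ)) (h13o : ⟪ξ₁, ξ₃⟫ = (0 : ℝ))
    (h23o : ⟪ξ₂, ξ₃⟫ = (0 : ℝ))
    -- almost contact structure of (φ, ξ)
    (hunit : ⟪ξ, ξ⟫ = (1 : ℝ))
    (hφξ : φ ξ = 0)
    (hφ2 : ∀ X : V, φ (φ X) = -X + ⟪X, ξ⟫ • ξ)
    (hφskew : ∀ X Y : V, ⟪φ X, Y⟫ = -⟪X, φ Y⟫)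
    -- almost contact structures of (φ_ν, ξ_ν)
    (hφν2 : ∀ X : V, (φ₁ (φ₁ X) = -X + ⟪X, ξ₁⟫ • ξ₁) ∧
      (φ₂ (φ₂ X) = -X + ⟪X, ξ₂⟫ • ξ₂) ∧ (φ₃ (φ₃ X) = -X + ⟪X, ξ₃⟫ • ξ₃))
    (hφνskew : ∀ X Y : V, (⟪φ₁ X, Y⟫ = -⟪X, φ₁ Y⟫) ∧
      (⟪φ₂ X, Y⟫ = -⟪X, φ₂ Y⟫) ∧ (⟪φ₃ X, Y⟫ = -⟪X, φ₃ Y⟫))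
    -- quaternionic relations
    (h11 : φ₁ ξ₁ = 0) (h22 : φ₂ ξ₂ = 0) (h33 : φ₃ ξ₃ = 0)
    (h12 : φ₁ ξ₂ = ξ₃) (h13 : φ₁ ξ₃ = -ξ₂)
    (h23 : φ₂ ξ₃ = ξ₁) (h21 : φ₂ ξ₁ = -ξ₃)
    (h31 : φ₃ ξ₁ = ξ₂) (h32 : φ₃ ξ₂ = -ξ₁)
    -- compatibility of φ with the φ_ν (consequences of J J_ν = J_ν J)
    (hφξν : φ ξ₁ = φ₁ ξ ∧ φ ξ₂ = φ₂ ξ ∧ φ ξ₃ = φ₃ ξ)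
    (hcomm : ∀ X : V,
      (φ₁ (φ X) = φ (φ₁ X) - ⟪X, ξ₁⟫ • ξ + ⟪X, ξ⟫ • ξ₁) ∧
      (φ₂ (φ X) = φ (φ₂ X) - ⟪X, ξ₂⟫ • ξ + ⟪X, ξ⟫ • ξ₂) ∧
      (φ₃ (φ X) = φ (φ₃ X) - ⟪X, ξ₃⟫ • ξ + ⟪X, ξ⟫ • ξ₃)) :
    RN (φ₁ ξ) = (2 * ⟪ξ, ξ₂⟫) • ξ₃ - (2 * ⟪ξ, ξ₃⟫) • ξ₂ ∧
    RN (φ₂ ξ) = (2 * ⟪ξ, ξ₃⟫) • ξ₁ - (2 * ⟪ξ, ξ₁⟫) • ξ₃ ∧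
    RN (φ₃ ξ) = (2 * ⟪ξ, ξ₁⟫) • ξ₂ - (2 * ⟪ξ, ξ₂⟫) • ξ₁ := by
  obtain ⟨s1, s2, s3⟩ := hφξν
  have sk1 := fun X Y => (hφνskew X Y).1
  have sk2 := fun X Y => (hφνskew X Y).2.1
  have sk3 := fun X Y => (hφνskew X Y).2.2
  refine ⟨?_, ?_, ?_⟩
  · exact aux13 φ φ₁ φ₂ φ₃ ξ ξ₁ ξ₂ ξ₃ RN (hRN (φ₁ ξ)) h1 h12o h13o sk1
      h11 h12 h13 h21 h31 s1 (hφ2 ξ₁)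
  · refine aux13 φ φ₂ φ₃ φ₁ ξ ξ₂ ξ₃ ξ₁ RN ?_ h2 h23o
      (by rw [real_inner_comm]; exact h12o) sk2 h22 h23 h21 h32 h12 s2
      (hφ2 ξ₂)
    rw [hRN (φ₂ ξ)]; module
  · refine aux13 φ φ₃ φ₁ φ₂ ξ ξ₃ ξ₁ ξ₂ RN ?_ h3
      (by rw [real_inner_comm]; exact h13o) (by rw [real_inner_comm]; exact h23o)
      sk3 h33 h31 h32 h13 h23 s3 (hφ2 ξ₃)
    rw [hRN (φ₃ ξ)]; module
end

section
/- Assume the semi-parallelism condition R(X,Y)∘R̄_N = R̄_N∘R(X,Y) as endomorphisms (i.e., R(X,Y)(R̄_N Z) = R̄_N(R(X,Y)Z) for all Z), where R̄_N(ξ₂) = 2ξ₂, R̄_N(ξ) = 8ξ, and R(ξ₂,ξ)ξ₂ = −(2+αβ)ξ with α = √8 cot(√8 r), β = √2 cot(√2 r), r ∈ (0, π/√8). Then applying semi-parallelism with X = ξ₂, Y = ξ, Z = ξ₂ gives 2·R(ξ₂,ξ)ξ₂ = R̄_N(R(ξ₂,ξ)ξ₂) = −8(2+αβ)ξ, hence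 6(2+αβ)ξ = 0, so 2 + αβ = 0, which contradicts 2 + αβ = 2cot²(√2 r) ≠ 0 for generic r; conclude there is no r ∈ (0, π/√8) making all these equations consistent. -/
open Real RealInnerProductSpace

lemma LinearMap.eq_zero_of_smul_eigenvector_of_ne {K V : Type*} [Field K] [AddCommGroup V]
    [Module K V] {f : V →ₗ[K] V} {v : V} {μ ν c : K} (hv : v ≠ 0) (hf : f v = μ • v)
    (hμν : μ ≠ ν) (h : ν • c • v = f (c • v)) : c = 0 := by
  rw [map_smul, hf, smul_comm, ← sub_eq_zero, ← smul_sub, ← sub_smul] at h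
  simpa [sub_eq_zero, hμν.symm, hv] using h

namespace Real

lemma sqrt_eight_mul (r : ℝ) : √8 * r = 2 * (√2 * r) := by
  rw [show (8 : ℝ) = 2 ^ 2 * 2 by norm_num, sqrt_mul (by norm_num), sqrt_sq (by norm_num), mul_assoc]

lemma sin_ne_zero_and_cos_ne_zero_of_sin_two_mul_ne_zero {x : ℝ} (h : sin (2 * x) ≠ 0) :
    sin x ≠ 0 ∧ cos x ≠ 0 := by
  rw [sin_two_mul] at h
  exact ⟨right_ne_zero_of_mul (left_ne_zero_of_mul h), right_ne_zero_of_mul h⟩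

lemma cot_ne_zero_of_sin_two_mul_ne_zero {x : ℝ} (h : sin (2 * x) ≠ 0) : cot x ≠ 0 := by
  obtain ⟨hs, hc⟩ := sin_ne_zero_and_cos_ne_zero_of_sin_two_mul_ne_zero h
  rw [cot_eq_cos_div_sin]
  exact div_ne_zero hc hs

lemma two_mul_cot_two_mul_mul_cot_s19 {x : ℝ} (h : sin (2 * x) ≠ 0) :
    2 * cot (2 * x) * cot x = cot x ^ 2 - 1 := by
  obtain ⟨hs, hc⟩ := sin_ne_zero_and_cos_ne_zero_of_sin_two_mul_ne_zero h
  rw [cot_eq_cos_div_sin, cot_eq_cos_div_sin, sin_two_mul, cos_two_mul']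
  field_simp

/-- `2 + αβ = 2 cot²(√2 r)` for `α = √8 cot(√8 r)`, `β = √2 cot(√2 r)`. -/
lemma two_add_sqrt_eight_cot_mul_sqrt_two_cot {r : ℝ} (h : sin (2 * (√2 * r)) ≠ 0) :
    2 + (√8 * cot (√8 * r)) * (√2 * cot (√2 * r)) = 2 * cot (√2 * r) ^ 2 := by
  have hsq : √2 * √2 = 2 := mul_self_sqrt (by norm_num)
  rw [sqrt_eight_mul r, show √8 = 2 * √2 by simpa using sqrt_eight_mul 1]
  linear_combination (2 : ℝ) * two_mul_cot_two_mul_mul_cot_s19 h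
    + (2 * cot (2 * (√2 * r)) * cot (√2 * r)) * hsq

end Real

/-- The type (A) exclusion argument: there is no `r ∈ (0, π/√8)` for which
the semi-parallelism equation `R(X,Y)(R̄_N Z) = R̄_N(R(X,Y)Z)`, together with
`R̄_N ξ₂ = 2ξ₂`, `R̄_N ξ = 8ξ` and `R(ξ₂,ξ)ξ₂ = −(2+αβ)ξ` with
`α = √8·cot(√8 r)`, `β = √2·cot(√2 r)`, can hold (for nonzero `ξ`):
semi-parallelism gives `2·R(ξ₂,ξ)ξ₂ = R̄_N(R(ξ₂,ξ)ξ₂) = −8(2+αβ)ξ`, hence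
`6(2+αβ)ξ = 0`, so `2+αβ = 0`, contradicting `2+αβ = 2cot²(√2 r) ≠ 0`. -/
theorem stmt_19 {V : Type*} [NormedAddCommGroup V] [InnerProductSpace ℝ V]
    (ξ ξ₂ : V) (hξ : ξ ≠ 0) (RN : V →ₗ[ℝ] V) (R : V → V → V → V) :
    ¬ ∃ r : ℝ, 0 < r ∧ r < π / Real.sqrt 8 ∧
      RN ξ₂ = (2 : ℝ) • ξ₂ ∧
      RN ξ = (8 : ℝ) • ξ ∧
      R ξ₂ ξ ξ₂ =
        -((2 + (Real.sqrt 8 * Real.cot (Real.sqrt 8 * r)) *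
            (Real.sqrt 2 * Real.cot (Real.sqrt 2 * r))) • ξ) ∧
      -- semi-parallelism applied with X = ξ₂, Y = ξ, Z = ξ₂
      (2 : ℝ) • R ξ₂ ξ ξ₂ = RN (R ξ₂ ξ ξ₂) := by
  rintro ⟨r, hr0, hrπ, -, hRN, hR, hsemi⟩
  have hsin : sin (2 * (√2 * r)) ≠ 0 := by
    rw [← sqrt_eight_mul]
    exact (sin_pos_of_pos_of_lt_pi (by positivity) ((lt_div_iff₀' (by positivity)).mp hrπ)).ne'
  rw [two_add_sqrt_eight_cot_mul_sqrt_two_cot hsin, ← neg_smul] at hR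
  rw [hR] at hsemi
  have hcot : -(2 * cot (√2 * r) ^ 2) = 0 :=
    LinearMap.eq_zero_of_smul_eigenvector_of_ne hξ hRN (by norm_num) hsemi
  exact cot_ne_zero_of_sin_two_mul_ne_zero hsin (by simpa using hcot)
end
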